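/- A factor u of a timed word w that contains two consecutive weak cuts of the cut decomposition for the component C is incompatible for C: starting the run at the first cut from any state of C, every run blocks before or exactly at the second cut. -/
import Mathlib


open scoped Classical

/-! ### Timed automata -/

/-- A clock valuation assigns a nonnegative real time value to each clock. -/
abbrev ClockVal (X : Type) := X → ℝ

/-- Comparison operators allowed in atomic clock constraints. -/
inductive Cmp where
  | lt | le | ge | gt
deriving DecidableEq

/-- An atomic (diagonal-free) clock constraint `x ⋈ c` with `c ∈ ℕ`. -/
structure Atomic (X : Type) where
  clock : X
  cmp : Cmp
  bound : ℕ

/-- Satisfaction of an atomic constraint by a clock valuation. -/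
def Atomic.sat {X : Type} (c : Atomic X) (v : ClockVal X) : Prop :=
  match c.cmp with
  | .lt => v c.clock < (c.bound : ℝ)
  | .le => v c.clock ≤ (c.bound : ℝ)
  | .ge => (c.bound : ℝ) ≤ v c.clock
  | .gt => (c.bound : ℝ) < v c.clock

/-- A guard is a conjunction (list) of atomic clock constraints. -/
abbrev Guard (X : Type) := List (Atomic X)

def Guard.sat {X : Type} (g : Guard X) (v : ClockVal X) : Prop := ∀ c ∈ g, c.sat v

/-- Resetting the clocks in `Y` to `0`. -/
noncomputable def resetVal {X : Type} (Y : Set X) (v : ClockVal X) : ClockVal X :=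
  fun x => if x ∈ Y then 0 else v x

/-- Elapsing of time `t` on a valuation. -/
def shift {X : Type} (v : ClockVal X) (t : ℝ) : ClockVal X := fun x => v x + t

/-- A timed automaton `A = (Σ, Q, X, E, I, F)`:  a set of transitions, each transition
carrying a guard, a letter and a set of clocks to reset, initial and final locations. -/
structure TimedAutomaton (A Q X : Type) where
  E : Set (Q × (Guard X × A × Set X) × Q)
  I : Set Q
  F : Set Q

/-- A timed word: a sequence of letters with (positive) relative time delays. -/
abbrev TWord (A : Type) := List (A × ℝ)

/-- The weight (total duration) of a timed word: the sum of its relative delays. -/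
def twt {A : Type} (w : TWord A) : ℝ := (w.map Prod.snd).sum

/-- The delay of the letter at position `j` (0 if out of range). -/
def delayAt {A : Type} (w : TWord A) (j : ℕ) : ℝ := (w.map Prod.snd).getD j 0

/-- A local run of the timed automaton over a timed word, from an arbitrary state
(location together with a clock valuation) to another state. -/
inductive LRun {A Q X : Type} (TA : TimedAutomaton A Q X) :
    Q × ClockVal X → TWord A → Q × ClockVal X → Prop
  | nil (s : Q × ClockVal X) : LRun TA s [] s
  | cons {q : Q} {v : ClockVal X} {g : Guard X} {a : A} {τ : ℝ} {Y : Set X} {q' : Q}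
      {u : TWord A} {s' : Q × ClockVal X} :
      (q, (g, a, Y), q') ∈ TA.E → 0 < τ → g.sat (shift v τ) →
      LRun TA (q', resetVal Y (shift v τ)) u s' →
      LRun TA (q, v) ((a, τ) :: u) s'

/-- The valuation assigning `0` to every clock. -/
def zeroVal {X : Type} : ClockVal X := fun _ => 0

/-- The language of finite timed words accepted by a timed automaton: words labelling
a run from an initial location with all clocks at `0` to a final location. -/
def Lf {A Q X : Type} (TA : TimedAutomaton A Q X) : Set (TWord A) :=
  {w | ∃ q₀ ∈ TA.I, ∃ qf ∈ TA.F, ∃ v', LRun TA (q₀, zeroVal) w (qf, v')}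

/-- `B` bounds all the constants appearing in the clock constraints of `TA`. -/
def MaxConst {A Q X : Type} (TA : TimedAutomaton A Q X) (B : ℕ) : Prop :=
  ∀ e ∈ TA.E, ∀ c ∈ e.2.1.1, c.bound ≤ B

/-! ### Regions and the region automaton -/

/-- A set of regions for the constraints of `TA`: a finite partition of the clock
valuations, compatible with the guards, with elapsing of time and with resets. -/
structure RegionSet (A Q X : Type) (TA : TimedAutomaton A Q X) where
  regions : Set (Set (ClockVal X))
  finite : regions.Finite
  partition : ∀ v : ClockVal X, ∃! R, R ∈ regions ∧ v ∈ R
  compatGuards : ∀ e ∈ TA.E, ∀ R ∈ regions,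
      R ⊆ {v | Guard.sat e.2.1.1 v} ∨ R ∩ {v | Guard.sat e.2.1.1 v} = ∅
  compatTime : ∀ R ∈ regions, ∀ R' ∈ regions,
      (∃ v ∈ R, ∃ t : ℝ, 0 ≤ t ∧ shift v t ∈ R') →
      ∀ v' ∈ R, ∃ t' : ℝ, 0 ≤ t' ∧ shift v' t' ∈ R'
  compatReset : ∀ R ∈ regions, ∀ R' ∈ regions, ∀ Y : Set X,
      ((resetVal Y) '' R ∩ R').Nonempty → (resetVal Y) '' R ⊆ R'

/-- A state of the region automaton: a location paired with a region. -/
abbrev RState (Q X : Type) := Q × Set (ClockVal X)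

/-- The states of the region automaton. -/
def RAStates {A Q X : Type} (TA : TimedAutomaton A Q X) (RS : RegionSet A Q X TA) :
    Set (RState Q X) := {s | s.2 ∈ RS.regions}

/-- The transition relation of the region automaton: `(q,R) →a (q',R')` whenever
`q →(g,a,Y) q'` in `TA` and there is a region `R''` satisfying `g` with `R' = [Y←0]R''`. -/
def RegionTrans {A Q X : Type} (TA : TimedAutomaton A Q X) (RS : RegionSet A Q X TA) :
    RState Q X → A → RState Q X → Prop :=
  fun s a s' =>
    s.2 ∈ RS.regions ∧ s'.2 ∈ RS.regions ∧
    ∃ g Y, (s.1, (g, a, Y), s'.1) ∈ TA.E ∧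
      ∃ R'' ∈ RS.regions, R'' ⊆ {v | Guard.sat g v} ∧ s'.2 = (resetVal Y) '' R''

/-- An (untimed) edge of the region automaton. -/
def RStep {A Q X : Type} (TA : TimedAutomaton A Q X) (RS : RegionSet A Q X TA)
    (s s' : RState Q X) : Prop := ∃ a, RegionTrans TA RS s a s'

/-- A strongly connected component of the region automaton (a nonempty set of states of
the region automaton which are pairwise reachable inside the component). -/
def IsSCC {A Q X : Type} (TA : TimedAutomaton A Q X) (RS : RegionSet A Q X TA)
    (C : Set (RState Q X)) : Prop :=
  C.Nonempty ∧ (∀ s ∈ C, s ∈ RAStates TA RS) ∧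
    ∀ s ∈ C, ∀ s' ∈ C,
      Relation.ReflTransGen (fun x y => RStep TA RS x y ∧ x ∈ C ∧ y ∈ C) s s'

/-- A transient state of the region automaton: a state lying on no cycle. -/
def Transient {A Q X : Type} (TA : TimedAutomaton A Q X) (RS : RegionSet A Q X TA)
    (s : RState Q X) : Prop := ¬ Relation.TransGen (RStep TA RS) s s

/-- A cycle inside the set `C` of states of the region automaton. -/
def CycleIn {A Q X : Type} (TA : TimedAutomaton A Q X) (RS : RegionSet A Q X TA)
    (C : Set (RState Q X)) (π : List (RState Q X)) : Prop :=
  (∀ s ∈ π, s ∈ C) ∧ List.Chain' (RStep TA RS) π ∧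
    ∃ h : π ≠ [], RStep TA RS (π.getLast h) (π.head h)

/-- A forgetful cycle: for every state `(q,R)` on the cycle and all valuations
`v, v' ∈ R` there is a timed word with a local run from `(q,v)` to `(q,v')`. -/
def Forgetful {A Q X : Type} (TA : TimedAutomaton A Q X) (π : List (RState Q X)) : Prop :=
  ∀ s ∈ π, ∀ v ∈ s.2, ∀ v' ∈ s.2, ∃ u : TWord A, LRun TA (s.1, v) u (s.1, v')

/-- A component is thick if it admits a forgetful cycle. -/
def Thick {A Q X : Type} (TA : TimedAutomaton A Q X) (RS : RegionSet A Q X TA)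
    (C : Set (RState Q X)) : Prop :=
  ∃ π, CycleIn TA RS C π ∧ Forgetful TA π

/-! ### Runs inside a component, compatibility -/

/-- The state `(q,v)` projects into the component `C`. -/
def inComp {A Q X : Type} (C : Set (RState Q X)) (s : Q × ClockVal X) : Prop :=
  ∃ R, (s.1, R) ∈ C ∧ s.2 ∈ R

/-- A local run all of whose (projected) states stay in the component `C`. -/
inductive LRunIn {A Q X : Type} (TA : TimedAutomaton A Q X) (C : Set (RState Q X)) :
    Q × ClockVal X → TWord A → Q × ClockVal X → Prop
  | nil (s : Q × ClockVal X) : inComp C s → LRunIn TA C s [] s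
  | cons {q : Q} {v : ClockVal X} {g : Guard X} {a : A} {τ : ℝ} {Y : Set X} {q' : Q}
      {u : TWord A} {s' : Q × ClockVal X} :
      inComp C (q, v) →
      (q, (g, a, Y), q') ∈ TA.E → 0 < τ → g.sat (shift v τ) →
      LRunIn TA C (q', resetVal Y (shift v τ)) u s' →
      LRunIn TA C (q, v) ((a, τ) :: u) s'

/-- A timed word is `C`-compatible: it has a local run whose projection stays in `C`. -/
def CComp {A Q X : Type} (TA : TimedAutomaton A Q X) (C : Set (RState Q X))
    (u : TWord A) : Prop :=
  ∃ s s', LRunIn TA C s u s'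

/-! ### Traced runs and paths of components -/

/-- A local run together with the trace of region states it visits. -/
inductive TRun {A Q X : Type} (TA : TimedAutomaton A Q X) (RS : RegionSet A Q X TA) :
    Q × ClockVal X → TWord A → List (RState Q X) → Q × ClockVal X → Prop
  | nil (q : Q) (v : ClockVal X) (R : Set (ClockVal X)) :
      R ∈ RS.regions → v ∈ R → TRun TA RS (q, v) [] [(q, R)] (q, v)
  | cons {q : Q} {v : ClockVal X} {R : Set (ClockVal X)} {g : Guard X} {a : A} {τ : ℝ}
      {Y : Set X} {q' : Q} {u : TWord A} {tr : List (RState Q X)} {s' : Q × ClockVal X} :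
      R ∈ RS.regions → v ∈ R →
      (q, (g, a, Y), q') ∈ TA.E → 0 < τ → Guard.sat g (shift v τ) →
      TRun TA RS (q', resetVal Y (shift v τ)) u tr s' →
      TRun TA RS (q, v) ((a, τ) :: u) ((q, R) :: tr) s'

/-- A node of a path `Π` in the graph of components of the region automaton: either a
(transient) state or a (strongly connected) component. -/
inductive PathNode (S : Type) where
  | state : S → PathNode S
  | comp : Set S → PathNode S

/-- Membership of a region-automaton state in a node of the path. -/
def memNode {S : Type} (s : S) : PathNode S → Prop
  | .state s' => s = s'
  | .comp C => s ∈ C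

/-- A valid path `Π`: every node is a transient state or a strongly connected component
of the region automaton. -/
def ValidPath {A Q X : Type} (TA : TimedAutomaton A Q X) (RS : RegionSet A Q X TA)
    (pth : List (PathNode (RState Q X))) : Prop :=
  ∀ n ∈ pth, (∃ s, n = .state s ∧ s ∈ RAStates TA RS ∧ Transient TA RS s) ∨
    (∃ C, n = .comp C ∧ IsSCC TA RS C)

/-- The trace `tr` follows the path `pth` between the node indices `lo` and `hi`:
there is a monotone assignment of the visited region states to nodes of the path. -/
def FollowsIn {S : Type} (tr : List S) (pth : List (PathNode S)) (lo hi : ℕ) : Prop :=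
  ∃ f : ℕ → ℕ, Monotone f ∧
    ∀ i (h : i < tr.length), lo ≤ f i ∧ f i ≤ hi ∧
      ∃ h' : f i < pth.length, memNode (tr.get ⟨i, h⟩) (pth.get ⟨f i, h'⟩)

/-- A timed word is compatible for the path `pth` between node indices `lo` and `hi`. -/
def CompatFor {A Q X : Type} (TA : TimedAutomaton A Q X) (RS : RegionSet A Q X TA)
    (u : TWord A) (pth : List (PathNode (RState Q X))) (lo hi : ℕ) : Prop :=
  ∃ s tr s', TRun TA RS s u tr s' ∧ FollowsIn tr pth lo hi

/-- The language of timed words admitting a run through the path `pth`. -/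
def LangPath {A Q X : Type} (TA : TimedAutomaton A Q X) (RS : RegionSet A Q X TA)
    (pth : List (PathNode (RState Q X))) : Set (TWord A) :=
  {u | CompatFor TA RS u pth 0 pth.length}

/-- The factor of `w` of length `ln` starting at position `p`. -/
def factorAt {A : Type} (w : TWord A) (p ln : ℕ) : TWord A := (w.drop p).take ln

/-- The union of two (overlapping) factors, given as (position, length) pairs. -/
def unionFactor (f g : ℕ × ℕ) : ℕ × ℕ := (f.1, max (f.1 + f.2) (g.1 + g.2) - f.1)

/-- The ordered factors of `w` described by `fs` (position/length pairs) are
`Π`-compatible: each factor is compatible for `pth` between some node indices, these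
windows follow the order of the path, and the union of any two consecutive
overlapping factors is also compatible for `pth`. -/
def PiCompatSeq {A Q X : Type} (TA : TimedAutomaton A Q X) (RS : RegionSet A Q X TA)
    (w : TWord A) {l : ℕ} (fs : Fin l → ℕ × ℕ)
    (pth : List (PathNode (RState Q X))) : Prop :=
  ∃ iv : Fin l → ℕ × ℕ,
    (∀ i, CompatFor TA RS (factorAt w (fs i).1 (fs i).2) pth (iv i).1 (iv i).2) ∧
    (∀ i j : Fin l, i ≤ j → (iv i).1 ≤ (iv j).1 ∧ (iv i).2 ≤ (iv j).2) ∧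
    (∀ (i : Fin l) (h : i.val + 1 < l),
      (fs ⟨i.val + 1, h⟩).1 < (fs i).1 + (fs i).2 →
      CompatFor TA RS
        (factorAt w (unionFactor (fs i) (fs ⟨i.val + 1, h⟩)).1
          (unionFactor (fs i) (fs ⟨i.val + 1, h⟩)).2)
        pth (iv i).1 (iv ⟨i.val + 1, h⟩).2)

/-! ### The timed edit distance -/

/-- One timed edit operation, with its cost: deletion of `(a,τ)` at cost `τ`,
insertion of `(a,τ)` at cost `τ`, modification of `(a,τ)` into `(a,τ')`
at cost `|τ - τ'|`. -/
inductive EditStep (A : Type) : TWord A → TWord A → ℝ → Prop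
  | del (u v : TWord A) (a : A) (τ : ℝ) : EditStep A (u ++ (a, τ) :: v) (u ++ v) τ
  | ins (u v : TWord A) (a : A) (τ : ℝ) : EditStep A (u ++ v) (u ++ (a, τ) :: v) τ
  | mod (u v : TWord A) (a : A) (τ τ' : ℝ) :
      EditStep A (u ++ (a, τ) :: v) (u ++ (a, τ') :: v) |τ - τ'|

/-- A sequence of timed edit operations, with its total cost. -/
inductive EditSeq (A : Type) : TWord A → TWord A → ℝ → Prop
  | refl (w : TWord A) : EditSeq A w w 0
  | step {w w' w'' : TWord A} {c d : ℝ} :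
      EditStep A w w' c → EditSeq A w' w'' d → EditSeq A w w'' (c + d)

/-- The absolute timed edit distance between two timed words. -/
noncomputable def editDist {A : Type} (w w' : TWord A) : ℝ := sInf {c | EditSeq A w w' c}

/-- The relative timed edit distance between two timed words. -/
noncomputable def relDist {A : Type} (w w' : TWord A) : ℝ :=
  editDist w w' / max (twt w) (twt w')

/-- The relative timed edit distance between a timed word and a timed language. -/
noncomputable def distToLang {A : Type} (w : TWord A) (L : Set (TWord A)) : ℝ :=
  sInf {d | ∃ w' ∈ L, relDist w w' = d}

/-! ### The cut decomposition -/

/-- The length of the longest `C`-compatible prefix of `u`. -/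
noncomputable def lcp {A Q X : Type} (TA : TimedAutomaton A Q X) (C : Set (RState Q X))
    (u : TWord A) : ℕ :=
  Nat.findGreatest (fun n => CComp TA C (u.take n)) u.length

/-- The blocks of the cut decomposition of `u` for the component `C`: each block is the
longest `C`-compatible factor starting from the position of the previous cut. -/
noncomputable def cutBlocks {A Q X : Type} (TA : TimedAutomaton A Q X)
    (C : Set (RState Q X)) (u : TWord A) : List (TWord A) :=
  if h : u.length ≤ lcp TA C u then [u]
  else u.take (lcp TA C u) :: cutBlocks TA C (u.drop (lcp TA C u + 1))
termination_by u.length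
decreasing_by
  simp only [List.length_drop]
  omega

/-- The cut letters of the cut decomposition of `u` for the component `C`. -/
noncomputable def cutLetters {A Q X : Type} (TA : TimedAutomaton A Q X)
    (C : Set (RState Q X)) (u : TWord A) : TWord A :=
  if h : u.length ≤ lcp TA C u then []
  else u.get ⟨lcp TA C u, by omega⟩ :: cutLetters TA C (u.drop (lcp TA C u + 1))
termination_by u.length
decreasing_by
  simp only [List.length_drop]
  omega

/-- The cut at letter `(a,τ)` is weak if the single letter is compatible with `C`
from some state of `C`; otherwise the cut is strong. -/
def WeakCut {A Q X : Type} (TA : TimedAutomaton A Q X) (C : Set (RState Q X))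
    (p : A × ℝ) : Prop := CComp TA C [p]

/-- The correction cost of a cut: at most `3mB` for a weak cut (insertion of a link via
a forgetful cycle), and the delay `τ` of the cut letter for a strong cut (deletion). -/
noncomputable def cutCost {A Q X : Type} (TA : TimedAutomaton A Q X)
    (C : Set (RState Q X)) (mR BR : ℝ) (p : A × ℝ) : ℝ :=
  if WeakCut TA C p then 3 * mR * BR else p.2

/-- The total weight of the cuts of the cut decomposition of `u` for `C`. -/
noncomputable def totalCutCost {A Q X : Type} (TA : TimedAutomaton A Q X)
    (C : Set (RState Q X)) (mR BR : ℝ) (u : TWord A) : ℝ :=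
  ((cutLetters TA C u).map (cutCost TA C mR BR)).sum

/-- The total weight of the weak cuts of the cut decomposition of `u` for `C`. -/
noncomputable def weakCutCost {A Q X : Type} (TA : TimedAutomaton A Q X)
    (C : Set (RState Q X)) (mR BR : ℝ) (u : TWord A) : ℝ :=
  (((cutLetters TA C u).filter (fun p => decide (WeakCut TA C p))).map
    (cutCost TA C mR BR)).sum

/-! ### Samples and the weighted time distribution -/

/-- The length of the minimal factor of `w` starting at position `j` of weight at
least `k` (up to the end of the word). -/
noncomputable def sampleLen {A : Type} (w : TWord A) (j : ℕ) (k : ℝ) : ℕ :=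
  if h : ∃ n, k ≤ twt ((w.drop j).take n) then Nat.find h else w.length - j

/-- The `k`-sample of `w` at position `j`: the minimal factor of weight at least `k`
starting at position `j`. -/
noncomputable def sampleAt {A : Type} (w : TWord A) (j : ℕ) (k : ℝ) : TWord A :=
  factorAt w j (sampleLen w j k)

/-- The probability, under the weighted time distribution `μ` (position `j` is selected
with probability `τ_j / T`), of the event `E` on positions of `w`. -/
noncomputable def muProb {A : Type} (w : TWord A) (E : ℕ → Prop) : ℝ :=
  (∑ j ∈ Finset.range w.length, if E j then delayAt w j else 0) / twt w

/-- The ordered `k`-samples of `w` determined by the chosen positions `js`. -/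
noncomputable def sortedSamples {A : Type} (w : TWord A) {l : ℕ}
    (js : Fin l → Fin w.length) (k : ℝ) : Fin l → ℕ × ℕ := fun i =>
  let p := (List.insertionSort (· ≤ ·) (List.ofFn fun i => (js i).val)).getD i 0
  (p, sampleLen w p k)

/-! ### Extended components and the tester -/

/-- An extended component: a thick strongly connected component of the region automaton
together with a prefix of transient states and a distinguished exit state. -/
structure ExtComp (A Q X : Type) (TA : TimedAutomaton A Q X) (RS : RegionSet A Q X TA) where
  pre : List (RState Q X)
  comp : Set (RState Q X)
  exit : RState Q X
  pre_mem : ∀ s ∈ pre, s ∈ RAStates TA RS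
  pre_transient : ∀ s ∈ pre, Transient TA RS s
  scc : IsSCC TA RS comp
  thick : Thick TA RS comp
  exit_mem : exit ∈ comp

/-- The path nodes of an extended component. -/
def ExtComp.nodes {A Q X : Type} {TA : TimedAutomaton A Q X} {RS : RegionSet A Q X TA}
    (Ec : ExtComp A Q X TA RS) : List (PathNode (RState Q X)) :=
  Ec.pre.map PathNode.state ++ [PathNode.comp Ec.comp]

/-- The path `Π̄ = C̄_1 ... C̄_l` of a sequence of extended components. -/
def pathOf {A Q X : Type} {TA : TimedAutomaton A Q X} {RS : RegionSet A Q X TA} {l : ℕ}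
    (Cs : Fin l → ExtComp A Q X TA RS) : List (PathNode (RState Q X)) :=
  (List.ofFn fun i => (Cs i).nodes).flatten

/-- The probability that the Word Tester along the path `pth`, drawing `l` independent
samples of weight at least `k` according to the weighted time distribution, rejects:
it rejects exactly when the ordered samples are not `Π`-compatible. -/
noncomputable def rejectProb {A Q X : Type} (TA : TimedAutomaton A Q X)
    (RS : RegionSet A Q X TA) (w : TWord A) (l : ℕ) (k : ℝ)
    (pth : List (PathNode (RState Q X))) : ℝ :=
  ∑ js : Fin l → Fin w.length,
    (∏ i, (w.get (js i)).2 / twt w) *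
      (if PiCompatSeq TA RS w (sortedSamples w js k) pth then 0 else 1)

/-- A decomposition of `w` into `l` consecutive intervals, the `i`-th of which carries
cuts for the component `Cs i` of accumulated correction cost between `εT/(2l)` and
`3εT/(2l)`. -/
def GoodDecomp {A Q X : Type} (TA : TimedAutomaton A Q X) {l : ℕ}
    (Cs : Fin l → Set (RState Q X)) (w : TWord A) (ε T mR BR : ℝ) : Prop :=
  ∃ b : Fin (l + 1) → ℕ, b 0 = 0 ∧ b (Fin.last l) = w.length ∧ Monotone b ∧
    ∀ i : Fin l,
      ε * T / (2 * l) ≤ totalCutCost TA (Cs i) mR BR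
          (factorAt w (b i.castSucc) (b i.succ - b i.castSucc)) ∧
      totalCutCost TA (Cs i) mR BR
          (factorAt w (b i.castSucc) (b i.succ - b i.castSucc)) ≤ 3 * ε * T / (2 * l)

/-! ### Auxiliary lemmas -/

lemma inComp_of_LRunIn {A Q X : Type} {TA : TimedAutomaton A Q X} {C : Set (RState Q X)}
    {s s' : Q × ClockVal X} {u : TWord A} (h : LRunIn TA C s u s') :
    inComp (A := A) C s := by
  cases h with
  | nil _ h => exact h
  | cons hc _ _ _ _ => exact hc

lemma LRunIn_append_split {A Q X : Type} {TA : TimedAutomaton A Q X}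
    {C : Set (RState Q X)} :
    ∀ (u₁ : TWord A) {u₂ : TWord A} {s s' : Q × ClockVal X},
      LRunIn TA C s (u₁ ++ u₂) s' →
      ∃ m, LRunIn TA C s u₁ m ∧ LRunIn TA C m u₂ s' := by
  intro u₁
  induction u₁ with
  | nil =>
    intro u₂ s s' h
    exact ⟨s, .nil s (inComp_of_LRunIn h), h⟩
  | cons p u ih =>
    intro u₂ s s' h
    cases h with
    | cons hc hE hτ hg hrest =>
      obtain ⟨m, h1, h2⟩ := ih hrest
      exact ⟨m, .cons hc hE hτ hg h1, h2⟩

lemma CComp_of_infix {A Q X : Type} {TA : TimedAutomaton A Q X} {C : Set (RState Q X)}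
    {u v : TWord A} (hv : v <:+: u) (h : CComp TA C u) : CComp TA C v := by
  obtain ⟨st, en, rfl⟩ := hv
  obtain ⟨s, s', hr⟩ := h
  rw [List.append_assoc] at hr
  obtain ⟨m, _, hr2⟩ := LRunIn_append_split st hr
  obtain ⟨m', hr3, _⟩ := LRunIn_append_split v hr2
  exact ⟨m, m', hr3⟩

lemma not_CComp_take_lcp_succ {A Q X : Type} (TA : TimedAutomaton A Q X)
    (C : Set (RState Q X)) (v : TWord A) (h : ¬ v.length ≤ lcp TA C v) :
    ¬ CComp TA C (v.take (lcp TA C v + 1)) := by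
  exact Nat.findGreatest_is_greatest
    (P := fun n => CComp TA C (v.take n)) (n := v.length)
    (Nat.lt_succ_self _) (by omega)

lemma cut_block_letter_incompatible {A Q X : Type} [Inhabited A]
    (TA : TimedAutomaton A Q X) (C : Set (RState Q X)) :
    ∀ (j : ℕ) (w : TWord A), j < (cutLetters TA C w).length →
      ¬ CComp TA C
        ((cutBlocks TA C w).getD j [] ++ [(cutLetters TA C w).getD j default]) := by
  intro j
  induction j with
  | zero =>
    intro w hj
    have h : ¬ w.length ≤ lcp TA C w := by
      intro hle
      rw [cutLetters, dif_pos hle] at hj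
      simp at hj
    rw [cutLetters, dif_neg h, cutBlocks, dif_neg h]
    simp only [List.getD_cons_zero]
    have heq : w.take (lcp TA C w) ++ [w.get ⟨lcp TA C w, by omega⟩]
        = w.take (lcp TA C w + 1) := by
      simpa using List.take_concat_get' w (lcp TA C w) (by omega)
    rw [heq]
    exact not_CComp_take_lcp_succ TA C w h
  | succ j ih =>
    intro w hj
    have h : ¬ w.length ≤ lcp TA C w := by
      intro hle
      rw [cutLetters, dif_pos hle] at hj
      simp at hj
    rw [cutLetters, dif_neg h] at hj ⊢
    rw [cutBlocks, dif_neg h]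
    simp only [List.getD_cons_succ]
    simp only [List.length_cons] at hj
    exact ih _ (by omega)

/-! ### STATEMENT 15 -/

/-- A factor `u` of a timed word `w` that contains two consecutive weak cuts of the cut
decomposition for the component `C` is incompatible for `C`: starting the run at the
first cut from any state of `C`, every run blocks before or exactly at the second
cut. -/
theorem two_weak_cuts_incompatible
    {A Q X : Type} [Inhabited A] (TA : TimedAutomaton A Q X) (RS : RegionSet A Q X TA)
    (C : Set (RState Q X)) (hC : IsSCC TA RS C)
    (w u : TWord A) (hpos : ∀ p ∈ w, 0 < p.2) (j : ℕ)
    (hj : j + 1 < (cutLetters TA C w).length)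
    (hweak1 : WeakCut TA C ((cutLetters TA C w).getD j default))
    (hweak2 : WeakCut TA C ((cutLetters TA C w).getD (j + 1) default))
    (hu : u <:+: w)
    (hcontains :
      ((cutLetters TA C w).getD j default ::
        (cutBlocks TA C w).getD (j + 1) [] ++
          [(cutLetters TA C w).getD (j + 1) default]) <:+: u) :
    ¬ CComp TA C u := by
  intro hcc
  have hbad := cut_block_letter_incompatible TA C (j + 1) w hj
  apply hbad
  refine CComp_of_infix ?_ hcc
  refine List.IsInfix.trans ?_ hcontains
  refine List.IsSuffix.isInfix ?_
  rw [List.cons_append]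
  exact List.suffix_cons _ _
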